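/- arXiv:2601.15430 — 4 statements merged into one kernel-verified Lean document; each statement's English description precedes it below -/
import Mathlib

section
/- For any finite sequence of vectors v_1, ..., v_n in a d-dimensional complex inner product space, the sum over all pairs (i,j) of |⟨v_i, v_j⟩|² is at least (1/d)·(∑_{i=1}^n ‖v_i‖²)². -/
open scoped InnerProductSpace BigOperators
open Complex Finset

private lemma welch_sum_swap4 {M : Type*} [AddCommMonoid M] {a b : ℕ}
    (f : Fin a → Fin a → Fin b → Fin b → M) :
    ∑ i, ∑ j, ∑ k, ∑ l, f i j k l = ∑ k, ∑ l, ∑ i, ∑ j, f i j k l := by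
  calc ∑ i, ∑ j, ∑ k, ∑ l, f i j k l
      = ∑ i, ∑ k, ∑ l, ∑ j, f i j k l := by
        refine Finset.sum_congr rfl fun i _ => ?_
        rw [Finset.sum_comm]
        exact Finset.sum_congr rfl fun k _ => Finset.sum_comm
    _ = ∑ k, ∑ i, ∑ l, ∑ j, f i j k l := Finset.sum_comm
    _ = ∑ k, ∑ l, ∑ i, ∑ j, f i j k l :=
        Finset.sum_congr rfl fun k _ => Finset.sum_comm


/-- Welch-type bound: for vectors `v 1, ..., v n` in a `d`-dimensional complex inner
product space, `∑_{i,j} |⟨v i, v j⟩|² ≥ (1/d) (∑ ‖v i‖²)²`. -/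
theorem welch_bound {V : Type*} [NormedAddCommGroup V] [InnerProductSpace ℂ V]
    [FiniteDimensional ℂ V] (d : ℕ) (hd : Module.finrank ℂ V = d) (hd1 : 1 ≤ d)
    (n : ℕ) (v : Fin n → V) :
    (1 / d : ℝ) * (∑ i, ‖v i‖ ^ 2) ^ 2 ≤ ∑ i, ∑ j, ‖(⟪v i, v j⟫_ℂ)‖ ^ 2 := by
  classical
  let b : OrthonormalBasis (Fin d) ℂ V :=
    (stdOrthonormalBasis ℂ V).reindex (finCongr hd)
  set c : Fin d → Fin n → ℂ := fun k i => ⟪b k, v i⟫_ℂ with hc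
  have key : ∀ x y : V, ⟪x, y⟫_ℂ = ∑ k, (starRingEnd ℂ) ⟪b k, x⟫_ℂ * ⟪b k, y⟫_ℂ := by
    intro x y
    rw [← b.sum_inner_mul_inner x y]
    exact Finset.sum_congr rfl fun k _ => by rw [← inner_conj_symm x (b k)]
  set A : Fin d → Fin d → ℂ := fun k l => ∑ i, c k i * (starRingEnd ℂ) (c l i) with hA
  -- RHS identity
  have hRHS : (∑ i, ∑ j, ‖(⟪v i, v j⟫_ℂ)‖ ^ 2 : ℝ)
      = ∑ k, ∑ l, Complex.normSq (A k l) := by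
    have : ((∑ i, ∑ j, ‖(⟪v i, v j⟫_ℂ)‖ ^ 2 : ℝ) : ℂ)
        = ((∑ k, ∑ l, Complex.normSq (A k l) : ℝ) : ℂ) := by
      push_cast
      calc (∑ i, ∑ j, (‖(⟪v i, v j⟫_ℂ)‖ ^ 2 : ℂ))
          = ∑ i, ∑ j, ⟪v i, v j⟫_ℂ * (starRingEnd ℂ) ⟪v i, v j⟫_ℂ := by
            refine Finset.sum_congr rfl fun i _ => Finset.sum_congr rfl fun j _ => ?_
            rw [Complex.mul_conj, Complex.normSq_eq_norm_sq]
            push_cast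
            rfl
        _ = ∑ i, ∑ j, (∑ k, (starRingEnd ℂ) (c k i) * c k j) *
              (∑ l, c l i * (starRingEnd ℂ) (c l j)) := by
            refine Finset.sum_congr rfl fun i _ => Finset.sum_congr rfl fun j _ => ?_
            rw [key (v i) (v j)]
            congr 1
            rw [map_sum]
            refine Finset.sum_congr rfl fun k _ => ?_
            rw [map_mul, RingHomInvPair.comp_apply_eq, mul_comm]
        _ = ∑ k, ∑ l, (∑ i, (starRingEnd ℂ) (c k i) * c l i) *
              (∑ j, c k j * (starRingEnd ℂ) (c l j)) := by
            simp_rw [Finset.sum_mul_sum]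
            rw [welch_sum_swap4]
            exact Finset.sum_congr rfl fun k _ => Finset.sum_congr rfl fun l _ =>
              Finset.sum_congr rfl fun i _ => Finset.sum_congr rfl fun j _ => by ring
        _ = ∑ k, ∑ l, (starRingEnd ℂ) (A k l) * A k l := by
            refine Finset.sum_congr rfl fun k _ => Finset.sum_congr rfl fun l _ => ?_
            congr 1
            rw [hA]
            simp only [map_sum, map_mul, RingHomInvPair.comp_apply_eq]
        _ = ∑ k, ∑ l, ((Complex.normSq (A k l) : ℝ) : ℂ) := by
            refine Finset.sum_congr rfl fun k _ => Finset.sum_congr rfl fun l _ => ?_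
            rw [mul_comm, Complex.mul_conj]
    exact_mod_cast this
  -- diagonal entries
  set t : Fin d → ℝ := fun k => ∑ i, Complex.normSq (c k i) with ht
  have hAkk : ∀ k, A k k = (t k : ℂ) := by
    intro k
    rw [hA, ht]
    push_cast
    exact Finset.sum_congr rfl fun i _ => Complex.mul_conj _
  -- LHS identity
  have hLHS : (∑ i, ‖v i‖ ^ 2 : ℝ) = ∑ k, t k := by
    have : ((∑ i, ‖v i‖ ^ 2 : ℝ) : ℂ) = ((∑ k, t k : ℝ) : ℂ) := by
      push_cast
      calc (∑ i, (‖v i‖ ^ 2 : ℂ)) = ∑ i, ⟪v i, v i⟫_ℂ := by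
            refine Finset.sum_congr rfl fun i _ => ?_
            rw [inner_self_eq_norm_sq_to_K]
            norm_cast
        _ = ∑ i, ∑ k, (starRingEnd ℂ) (c k i) * c k i :=
            Finset.sum_congr rfl fun i _ => key (v i) (v i)
        _ = ∑ k, ∑ i, ((Complex.normSq (c k i) : ℝ) : ℂ) := by
            rw [Finset.sum_comm]
            refine Finset.sum_congr rfl fun k _ => Finset.sum_congr rfl fun i _ => ?_
            rw [mul_comm, Complex.mul_conj]
        _ = ∑ k, ((t k : ℝ) : ℂ) := by
            refine Finset.sum_congr rfl fun k _ => ?_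
            rw [ht]
            push_cast
            rfl
    exact_mod_cast this
  rw [hRHS, hLHS]
  have htnn : ∀ k, 0 ≤ t k := fun k => Finset.sum_nonneg fun i _ => Complex.normSq_nonneg _
  have h1 : (∑ k, t k) ^ 2 ≤ (d : ℝ) * ∑ k, t k ^ 2 := by
    simpa using (sq_sum_le_card_mul_sum_sq (s := Finset.univ) (f := t))
  have h2 : ∑ k, t k ^ 2 ≤ ∑ k, ∑ l, Complex.normSq (A k l) := by
    refine Finset.sum_le_sum fun k _ => ?_
    calc t k ^ 2 = Complex.normSq (A k k) := by
          rw [hAkk, Complex.normSq_ofReal, sq]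
      _ ≤ ∑ l, Complex.normSq (A k l) :=
        Finset.single_le_sum (fun l _ => Complex.normSq_nonneg _) (Finset.mem_univ k)
  have hd0 : (0:ℝ) < d := by exact_mod_cast hd1
  rw [div_mul_eq_mul_div, one_mul, div_le_iff₀ hd0]
  calc (∑ k, t k) ^ 2 ≤ (d:ℝ) * ∑ k, t k ^ 2 := h1
    _ ≤ (∑ k, ∑ l, Complex.normSq (A k l)) * d := by
        rw [mul_comm]
        exact mul_le_mul_of_nonneg_right h2 hd0.le
end

section
/- For a finite sequence of vectors v_1, ..., v_n in a d-dimensional complex inner product space V, equality ∑_{i,j} |⟨v_i, v_j⟩|² = (1/d)·(∑_i ‖v_i‖²)² holds if and only if the frame operator S(x) = ∑_i ⟨x, v_i⟩ v_i is a scalar multiple of the identity (i.e., the sequence is a tight frame), provided not all v_i are zero. -/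
open scoped InnerProductSpace BigOperators

/-- Equality in the Welch bound holds iff the frame operator is a (positive) scalar
multiple of the identity, i.e. the sequence is a tight frame (assuming not all
vectors vanish). -/
theorem welch_equality_iff_tight_frame {V : Type*} [NormedAddCommGroup V]
    [InnerProductSpace ℂ V] [FiniteDimensional ℂ V]
    (d : ℕ) (hd : Module.finrank ℂ V = d) (hd1 : 1 ≤ d)
    (n : ℕ) (v : Fin n → V) (hv : ∃ i, v i ≠ 0) :
    (∑ i, ∑ j, ‖(⟪v i, v j⟫_ℂ)‖ ^ 2 = (1 / d : ℝ) * (∑ i, ‖v i‖ ^ 2) ^ 2) ↔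
      ∃ lam : ℝ, 0 < lam ∧ ∀ x : V, ∑ i, ⟪v i, x⟫_ℂ • v i = (lam : ℂ) • x := by
  subst hd
  set m := Module.finrank ℂ V with hm
  set b := stdOrthonormalBasis ℂ V with hb
  set S : V →ₗ[ℂ] V :=
    { toFun := fun x => ∑ i, ⟪v i, x⟫_ℂ • v i
      map_add' := by
        intro x y
        simp [inner_add_right, add_smul, Finset.sum_add_distrib]
      map_smul' := by
        intro c x
        simp [inner_smul_right, smul_smul, Finset.smul_sum] } with hS
  set x : PiLp 2 (fun _ : Fin m => V) := WithLp.toLp 2 (fun k => b k) with hx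
  set y : PiLp 2 (fun _ : Fin m => V) := WithLp.toLp 2 (fun k => S (b k)) with hy
  set B : ℝ := ∑ i, ‖v i‖ ^ 2 with hBdef
  have hB : (0 : ℝ) < B := by
    obtain ⟨i0, hi0⟩ := hv
    have h1 : (0 : ℝ) < ‖v i0‖ ^ 2 := pow_pos (norm_pos_iff.mpr hi0) 2
    have h2 : ∀ i ∈ Finset.univ, (0 : ℝ) ≤ ‖v i‖ ^ 2 := fun i _ => by positivity
    exact lt_of_lt_of_le h1 (Finset.single_le_sum h2 (Finset.mem_univ i0))
  have hmpos : (0 : ℝ) < m := by exact_mod_cast lt_of_lt_of_le one_pos hd1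
  -- inner product ⟪x, y⟫ equals B
  have hxy : ⟪x, y⟫_ℂ = (B : ℂ) := by
    rw [PiLp.inner_apply]
    have h1 : ∀ k, ⟪x k, y k⟫_ℂ = ∑ i, ⟪v i, b k⟫_ℂ * ⟪b k, v i⟫_ℂ := fun k => by
      simp [hx, hy, hS, inner_sum, inner_smul_right]
    simp_rw [h1]
    rw [Finset.sum_comm]
    have h2 : ∀ i, ∑ k, ⟪v i, b k⟫_ℂ * ⟪b k, v i⟫_ℂ = ⟪v i, v i⟫_ℂ := fun i =>
      b.sum_inner_mul_inner (v i) (v i)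
    rw [Finset.sum_congr rfl fun i _ => h2 i]
    simp_rw [@inner_self_eq_norm_sq_to_K ℂ]
    push_cast [hBdef]
    rfl
  -- ‖y‖ ^ 2 equals the Welch sum
  have hyy : ‖y‖ ^ 2 = ∑ i, ∑ j, ‖(⟪v i, v j⟫_ℂ)‖ ^ 2 := by
    have hC : ⟪y, y⟫_ℂ = ((∑ i, ∑ j, ‖(⟪v i, v j⟫_ℂ)‖ ^ 2 : ℝ) : ℂ) := by
      rw [PiLp.inner_apply]
      have h1 : ∀ k, ⟪y k, y k⟫_ℂ =
          ∑ i, ∑ j, ⟪b k, v i⟫_ℂ * (⟪v j, b k⟫_ℂ * ⟪v i, v j⟫_ℂ) := fun k => by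
        simp only [hy, hS, sum_inner, inner_sum, inner_smul_left, inner_smul_right,
          inner_conj_symm, LinearMap.coe_mk, AddHom.coe_mk]
        simp_rw [Finset.mul_sum]
        rw [Finset.sum_comm]
        exact Finset.sum_congr rfl fun i _ => Finset.sum_congr rfl fun j _ => by ring
      simp_rw [h1]
      rw [Finset.sum_comm]
      have h2 : ∀ i, ∑ k, ∑ j, ⟪b k, v i⟫_ℂ * (⟪v j, b k⟫_ℂ * ⟪v i, v j⟫_ℂ)
          = ∑ j, ∑ k, ⟪b k, v i⟫_ℂ * (⟪v j, b k⟫_ℂ * ⟪v i, v j⟫_ℂ) := fun i =>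
        Finset.sum_comm
      rw [Finset.sum_congr rfl fun i _ => h2 i]
      have h3 : ∀ i j, ∑ k, ⟪b k, v i⟫_ℂ * (⟪v j, b k⟫_ℂ * ⟪v i, v j⟫_ℂ)
          = ⟪v j, v i⟫_ℂ * ⟪v i, v j⟫_ℂ := by
        intro i j
        rw [← b.sum_inner_mul_inner (v j) (v i), Finset.sum_mul]
        refine Finset.sum_congr rfl fun k _ => by ring
      rw [Finset.sum_congr rfl fun i _ => Finset.sum_congr rfl fun j _ => h3 i j]
      have h4 : ∀ i j, ⟪v j, v i⟫_ℂ * ⟪v i, v j⟫_ℂ = ((‖⟪v i, v j⟫_ℂ‖ ^ 2 : ℝ) : ℂ) := by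
        intro i j
        have hz : ⟪v i, v j⟫_ℂ = (starRingEnd ℂ) ⟪v j, v i⟫_ℂ := (inner_conj_symm _ _).symm
        rw [hz, RCLike.mul_conj, norm_inner_symm]
        rw [RCLike.norm_conj, norm_inner_symm (v i) (v j)]
        norm_cast
      simp_rw [h4]
      push_cast
      rfl
    have hyC := inner_self_eq_norm_sq_to_K (𝕜 := ℂ) y
    rw [hC] at hyC
    rw [← RCLike.ofReal_pow] at hyC
    exact (RCLike.ofReal_injective (K := ℂ) hyC).symm
  -- ‖x‖ ^ 2 = m
  have hxx : ‖x‖ ^ 2 = (m : ℝ) := by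
    rw [PiLp.norm_sq_eq_of_L2]
    simp [hx, b.orthonormal.1]
  have hxxC : ⟪x, x⟫_ℂ = (m : ℂ) := by
    rw [PiLp.inner_apply]
    simp [hx, @inner_self_eq_norm_sq_to_K ℂ, b.orthonormal.1]
  constructor
  · intro h
    -- equality in Cauchy–Schwarz
    have hys : ‖y‖ ^ 2 = (1 / m : ℝ) * B ^ 2 := by rw [hyy, h]
    have hx0 : x ≠ 0 := by
      intro h0
      rw [h0] at hxx
      simp at hxx
      exact absurd hxx.symm (ne_of_gt hmpos)
    have hy0 : y ≠ 0 := by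
      intro h0
      rw [h0] at hxy
      simp at hxy
      exact hB.ne' (by exact_mod_cast hxy.symm)
    have hcs : ‖⟪x, y⟫_ℂ‖ = ‖x‖ * ‖y‖ := by
      have h1 : ‖⟪x, y⟫_ℂ‖ ^ 2 = (‖x‖ * ‖y‖) ^ 2 := by
        rw [hxy, mul_pow, hxx, hys, Complex.norm_real, Real.norm_eq_abs,
          abs_of_pos hB]
        field_simp
      rw [← Real.sqrt_sq (norm_nonneg _), h1, Real.sqrt_sq (by positivity)]
    obtain ⟨r, hr0, hrx⟩ := (norm_inner_eq_norm_iff hx0 hy0).mp hcs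
    -- identify r
    have hrm : r * (m : ℂ) = (B : ℂ) := by
      have : ⟪x, r • x⟫_ℂ = (B : ℂ) := by rw [← hrx, hxy]
      rw [inner_smul_right, hxxC] at this
      exact this
    refine ⟨B / m, div_pos hB hmpos, ?_⟩
    have hrval : r = ((B / m : ℝ) : ℂ) := by
      have hm0 : (m : ℂ) ≠ 0 := by exact_mod_cast hmpos.ne'
      field_simp
      push_cast
      rw [eq_div_iff hm0]
      exact hrm
    -- S (b k) = r • b k for each k
    have hSb : ∀ k, S (b k) = r • b k := fun k => congrArg (fun w : PiLp 2 (fun _ : Fin m => V) => w k) hrx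
    intro z
    have hz : S z = r • z := by
      conv_lhs => rw [← b.sum_repr' z, map_sum]
      conv_rhs => rw [← b.sum_repr' z, Finset.smul_sum]
      refine Finset.sum_congr rfl fun k _ => ?_
      rw [map_smul, hSb k]
      exact smul_comm _ _ _
    rw [← hrval]
    exact hz
  · rintro ⟨lam, hlam, hT⟩
    have hyx : y = (lam : ℂ) • x := PiLp.ext fun k => hT (b k)
    have hBlam : B = lam * m := by
      have : (B : ℂ) = (lam : ℂ) * m := by
        rw [← hxy, hyx, inner_smul_right, hxxC]
      exact_mod_cast this
    rw [← hyy, hyx, norm_smul, Complex.norm_real, Real.norm_eq_abs,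
      abs_of_pos hlam, mul_pow, hxx, hBlam]
    field_simp
end

section
/- Let v_1,...,v_n be vectors in a d-dimensional complex inner product space. Suppose the double sum decomposes as ∑_{i≠j} |⟨v_i,v_j⟩|² = ∑_{(i,j) ∈ R} |⟨v_i,v_j⟩|² + ∑_{L} ∑_{i≠j, i,j ∈ I(L)} |⟨v_i,v_j⟩|², where R and the sets I(L) partition the off-diagonal pairs. If (v_i) is a tight frame and for each L the subfamily (v_i)_{i∈I(L)} lies in a 2-dimensional subspace, then ∑_L (1/2)(∑_{i∈I(L)} ‖v_i‖²)² − ∑_L ∑_{i∈I(L)} ‖v_i‖⁴ ≤ (1/d)(∑_i ‖v_i‖²)² − ∑_i ‖v_i‖⁴, i.e., the Hirzebruch-type quadratic inequality holds. -/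
open scoped InnerProductSpace BigOperators

lemma cnorm_sq (z : ℂ) : ‖z‖^2 = (z * (starRingEnd ℂ) z).re := by
  rw [Complex.mul_conj, Complex.ofReal_re, Complex.normSq_eq_norm_sq]

lemma renorm {V : Type*} [SeminormedAddGroup V] (x : V) : (((‖x‖:ℂ))^2).re = ‖x‖^2 := by
  rw [← Complex.ofReal_pow, Complex.ofReal_re]

lemma welch_aux {W : Type*} [NormedAddCommGroup W] [InnerProductSpace ℂ W]
    {κ : Type*} [Fintype κ] (b : OrthonormalBasis κ ℂ W) {ι : Type*} (s : Finset ι) (w : ι → W) :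
    (∑ i ∈ s, ‖w i‖^2)^2 ≤ (Fintype.card κ) * ∑ i ∈ s, ∑ j ∈ s, ‖⟪w i, w j⟫_ℂ‖^2 := by
  classical
  set c : ι → κ → ℂ := fun i k => ⟪b k, w i⟫_ℂ with hc
  have h1 : ∀ i j, ⟪w i, w j⟫_ℂ = ∑ k, (starRingEnd ℂ) (c i k) * c j k := by
    intro i j
    rw [← b.sum_inner_mul_inner (w i) (w j)]
    refine Finset.sum_congr rfl fun k _ => ?_
    rw [hc]
    simp only []
    rw [inner_conj_symm]
  set M : κ → κ → ℂ := fun k l => ∑ i ∈ s, (starRingEnd ℂ) (c i k) * c i l with hM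
  have hMconj : ∀ k l, (starRingEnd ℂ) (M k l) = ∑ j ∈ s, c j k * (starRingEnd ℂ) (c j l) := by
    intro k l
    rw [hM]
    simp only [map_sum, map_mul, Complex.conj_conj]
  have hC : ∑ i ∈ s, ∑ j ∈ s, (⟪w i, w j⟫_ℂ * (starRingEnd ℂ) ⟪w i, w j⟫_ℂ)
      = ∑ k : κ, ∑ l : κ, (M k l * (starRingEnd ℂ) (M k l)) := by
    have conj_inner : ∀ i j, (starRingEnd ℂ) ⟪w i, w j⟫_ℂ = ∑ l : κ, c i l * (starRingEnd ℂ) (c j l) := by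
      intro i j
      rw [h1]
      simp only [map_sum, map_mul, Complex.conj_conj]
    calc ∑ i ∈ s, ∑ j ∈ s, (⟪w i, w j⟫_ℂ * (starRingEnd ℂ) ⟪w i, w j⟫_ℂ)
        = ∑ i ∈ s, ∑ j ∈ s, ∑ k : κ, ∑ l : κ,
            ((starRingEnd ℂ) (c i k) * c i l) * (c j k * (starRingEnd ℂ) (c j l)) := by
          refine Finset.sum_congr rfl fun i _ => Finset.sum_congr rfl fun j _ => ?_
          rw [conj_inner, h1, Finset.sum_mul_sum]
          exact Finset.sum_congr rfl fun k _ => Finset.sum_congr rfl fun l _ => by ring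
      _ = ∑ i ∈ s, ∑ k : κ, ∑ j ∈ s, ∑ l : κ,
            ((starRingEnd ℂ) (c i k) * c i l) * (c j k * (starRingEnd ℂ) (c j l)) := by
          exact Finset.sum_congr rfl fun i _ => Finset.sum_comm
      _ = ∑ k : κ, ∑ i ∈ s, ∑ j ∈ s, ∑ l : κ,
            ((starRingEnd ℂ) (c i k) * c i l) * (c j k * (starRingEnd ℂ) (c j l)) := Finset.sum_comm
      _ = ∑ k : κ, ∑ i ∈ s, ∑ l : κ, ∑ j ∈ s,
            ((starRingEnd ℂ) (c i k) * c i l) * (c j k * (starRingEnd ℂ) (c j l)) := by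
          exact Finset.sum_congr rfl fun k _ => Finset.sum_congr rfl fun i _ => Finset.sum_comm
      _ = ∑ k : κ, ∑ l : κ, ∑ i ∈ s, ∑ j ∈ s,
            ((starRingEnd ℂ) (c i k) * c i l) * (c j k * (starRingEnd ℂ) (c j l)) := by
          exact Finset.sum_congr rfl fun k _ => Finset.sum_comm
      _ = ∑ k : κ, ∑ l : κ, (M k l * (starRingEnd ℂ) (M k l)) := by
          refine Finset.sum_congr rfl fun k _ => Finset.sum_congr rfl fun l _ => ?_
          rw [hMconj, hM, Finset.sum_mul_sum]
  have h2 : ∑ i ∈ s, ∑ j ∈ s, (‖⟪w i, w j⟫_ℂ‖^2 : ℝ) = ∑ k : κ, ∑ l : κ, ‖M k l‖^2 := by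
    simp only [cnorm_sq, ← Complex.re_sum]
    rw [hC]
  have hdiag : ∀ i, (⟪w i, w i⟫_ℂ).re = ‖w i‖^2 := fun i => by
    simp [inner_self_eq_norm_sq_to_K, ← Complex.ofReal_pow]
  have h3 : ∑ k : κ, (M k k).re = ∑ i ∈ s, ‖w i‖^2 := by
    calc ∑ k : κ, (M k k).re
        = ∑ k : κ, ∑ i ∈ s, ((starRingEnd ℂ) (c i k) * c i k).re := by
          refine Finset.sum_congr rfl fun k _ => ?_
          rw [hM, Complex.re_sum]
      _ = ∑ i ∈ s, ∑ k : κ, ((starRingEnd ℂ) (c i k) * c i k).re := Finset.sum_comm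
      _ = ∑ i ∈ s, ‖w i‖^2 := by
          refine Finset.sum_congr rfl fun i _ => ?_
          rw [← Complex.re_sum, ← h1 i i, hdiag]
  have h4 : (∑ k : κ, (M k k).re)^2 ≤ (Fintype.card κ) * ∑ k : κ, (M k k).re ^ 2 := by
    simpa using sq_sum_le_card_mul_sum_sq (s := (Finset.univ : Finset κ)) (f := fun k => (M k k).re)
  have h5 : ∑ k : κ, ((M k k).re)^2 ≤ ∑ k : κ, ∑ l : κ, ‖M k l‖^2 := by
    refine Finset.sum_le_sum fun k _ => ?_
    have : ((M k k).re)^2 ≤ ‖M k k‖^2 := by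
      calc ((M k k).re)^2 = |(M k k).re|^2 := (sq_abs _).symm
        _ ≤ ‖M k k‖^2 :=
            pow_le_pow_left₀ (abs_nonneg _) (Complex.abs_re_le_norm (M k k)) 2
    refine this.trans ?_
    exact Finset.single_le_sum (f := fun l => ‖M k l‖^2) (fun l _ => by positivity)
      (Finset.mem_univ k)
  calc (∑ i ∈ s, ‖w i‖^2)^2 = (∑ k : κ, (M k k).re)^2 := by rw [h3]
    _ ≤ (Fintype.card κ) * ∑ k : κ, (M k k).re ^ 2 := h4
    _ ≤ (Fintype.card κ) * ∑ k : κ, ∑ l : κ, ‖M k l‖^2 := by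
        exact mul_le_mul_of_nonneg_left h5 (by positivity)
    _ = (Fintype.card κ) * ∑ i ∈ s, ∑ j ∈ s, ‖⟪w i, w j⟫_ℂ‖^2 := by rw [h2]

section TF
variable {V : Type*} [NormedAddCommGroup V] [InnerProductSpace ℂ V] [FiniteDimensional ℂ V]
  {n : ℕ} {v : Fin n → V} {lam : ℝ}

omit [FiniteDimensional ℂ V] in
lemma tf1 (htf : ∀ x : V, ∑ i, ⟪v i, x⟫_ℂ • v i = (lam : ℂ) • x) (j : Fin n) :
    ∑ i, ‖⟪v i, v j⟫_ℂ‖^2 = lam * ‖v j‖^2 := by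
  have h := congrArg (fun x => (⟪v j, x⟫_ℂ).re) (htf (v j))
  simp only [inner_sum, inner_smul_right, Complex.re_sum] at h
  calc ∑ i, ‖⟪v i, v j⟫_ℂ‖^2
      = ∑ i, (⟪v i, v j⟫_ℂ * ⟪v j, v i⟫_ℂ).re := by
        refine Finset.sum_congr rfl fun i _ => ?_
        have hcs : (starRingEnd ℂ) ⟪v i, v j⟫_ℂ = ⟪v j, v i⟫_ℂ := inner_conj_symm _ _
        rw [cnorm_sq, hcs]
    _ = lam * ‖v j‖^2 := by
        rw [h]
        have : ⟪v j, v j⟫_ℂ = ((‖v j‖:ℂ))^2 := inner_self_eq_norm_sq_to_K (v j)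
        rw [this, Complex.mul_re]
        simp [renorm]

lemma tf2 (htf : ∀ x : V, ∑ i, ⟪v i, x⟫_ℂ • v i = (lam : ℂ) • x) {d : ℕ}
    (hd : Module.finrank ℂ V = d) :
    ∑ i, ‖v i‖^2 = lam * d := by
  classical
  set b := stdOrthonormalBasis ℂ V
  have hbk : ∀ k, ∑ i, (⟪v i, b k⟫_ℂ * ⟪b k, v i⟫_ℂ) = (lam : ℂ) := by
    intro k
    have h := congrArg (fun x => ⟪b k, x⟫_ℂ) (htf (b k))
    simp only [inner_sum, inner_smul_right] at h
    rw [h]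
    have : ⟪b k, b k⟫_ℂ = ((‖b k‖:ℂ))^2 := inner_self_eq_norm_sq_to_K (b k)
    rw [this, b.orthonormal.1 k]
    simp
  have key : ∑ i, (⟪v i, v i⟫_ℂ) = (lam : ℂ) * (Module.finrank ℂ V) := by
    calc ∑ i, (⟪v i, v i⟫_ℂ)
        = ∑ i, ∑ k, (⟪v i, b k⟫_ℂ * ⟪b k, v i⟫_ℂ) := by
          refine Finset.sum_congr rfl fun i _ => ?_
          rw [b.sum_inner_mul_inner]
      _ = ∑ k, ∑ i, (⟪v i, b k⟫_ℂ * ⟪b k, v i⟫_ℂ) := Finset.sum_comm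
      _ = ∑ _k : Fin (Module.finrank ℂ V), (lam : ℂ) := by
          exact Finset.sum_congr rfl fun k _ => hbk k
      _ = (lam : ℂ) * (Module.finrank ℂ V) := by
          simp [mul_comm]
  have := congrArg Complex.re key
  simp only [Complex.re_sum] at this
  rw [← hd]
  calc ∑ i, ‖v i‖^2 = ∑ i, (⟪v i, v i⟫_ℂ).re := by
        refine Finset.sum_congr rfl fun i _ => ?_
        rw [inner_self_eq_norm_sq_to_K]
        exact (renorm (v i)).symm
    _ = lam * (Module.finrank ℂ V) := by
        rw [this]
        simp
end TF

/-- Hirzebruch-type quadratic inequality obtained from the Welch bound applied to `V`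
and to each 2-dimensional subspace, plus nonnegativity over the pairs in `R`. -/
theorem hirzebruch_type_inequality {V : Type*} [NormedAddCommGroup V]
    [InnerProductSpace ℂ V] [FiniteDimensional ℂ V]
    (d n : ℕ) (hd : Module.finrank ℂ V = d) (hd2 : 2 ≤ d)
    (v : Fin n → V) (lam : ℝ)
    (htf : ∀ x : V, ∑ i, ⟪v i, x⟫_ℂ • v i = (lam : ℂ) • x)
    {Λ : Type*} [Fintype Λ] (I : Λ → Finset (Fin n))
    (hI3 : ∀ L, 3 ≤ (I L).card)
    (hW : ∀ L, ∃ W : Submodule ℂ V, Module.finrank ℂ W = 2 ∧ ∀ i ∈ I L, v i ∈ W)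
    (R : Finset (Fin n × Fin n))
    (hdecomp :
      ∑ p ∈ Finset.univ.filter (fun p : Fin n × Fin n => p.1 ≠ p.2),
          ‖(⟪v p.1, v p.2⟫_ℂ)‖ ^ 2 =
        (∑ p ∈ R, ‖(⟪v p.1, v p.2⟫_ℂ)‖ ^ 2) +
          ∑ L, ∑ i ∈ I L, ∑ j ∈ (I L).erase i, ‖(⟪v i, v j⟫_ℂ)‖ ^ 2) :
    ∑ L, ((1 / 2 : ℝ) * (∑ i ∈ I L, ‖v i‖ ^ 2) ^ 2 - ∑ i ∈ I L, ‖v i‖ ^ 4) ≤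
      (1 / d : ℝ) * (∑ i, ‖v i‖ ^ 2) ^ 2 - ∑ i, ‖v i‖ ^ 4 := by
  classical
  have hdR : (d:ℝ) ≠ 0 := by
    have : (0:ℕ) < d := by omega
    exact_mod_cast this.ne'
  have hvv : ∀ i : Fin n, ‖(⟪v i, v i⟫_ℂ)‖^2 = ‖v i‖^4 := by
    intro i
    rw [inner_self_eq_norm_sq_to_K]
    rw [norm_pow, RCLike.norm_ofReal, abs_norm]
    ring
  -- full double sum equals (1/d) S^2
  have hfull : ∑ i, ∑ j, ‖(⟪v i, v j⟫_ℂ)‖^2 = (1/d:ℝ) * (∑ i, ‖v i‖^2)^2 := by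
    have h1 : ∑ j, ∑ i, ‖(⟪v i, v j⟫_ℂ)‖^2 = lam * ∑ i, ‖v i‖^2 := by
      calc ∑ j, ∑ i, ‖(⟪v i, v j⟫_ℂ)‖^2 = ∑ j, lam * ‖v j‖^2 :=
            Finset.sum_congr rfl fun j _ => tf1 htf j
        _ = lam * ∑ i, ‖v i‖^2 := by rw [Finset.mul_sum]
    have h2 : ∑ i, ‖v i‖^2 = lam * d := tf2 htf hd
    rw [Finset.sum_comm, h1, h2]
    field_simp
  -- off-diagonal full sum
  have hoff : ∑ p ∈ Finset.univ.filter (fun p : Fin n × Fin n => p.1 ≠ p.2),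
      ‖(⟪v p.1, v p.2⟫_ℂ)‖^2 = (1/d:ℝ) * (∑ i, ‖v i‖^2)^2 - ∑ i, ‖v i‖^4 := by
    have hsplit := Finset.sum_filter_add_sum_filter_not Finset.univ
      (fun p : Fin n × Fin n => p.1 ≠ p.2) (fun p => ‖(⟪v p.1, v p.2⟫_ℂ)‖^2)
    have hdiag : ∑ p ∈ Finset.univ.filter (fun p : Fin n × Fin n => ¬ p.1 ≠ p.2),
        ‖(⟪v p.1, v p.2⟫_ℂ)‖^2 = ∑ i, ‖v i‖^4 := by
      rw [Finset.sum_filter, Fintype.sum_prod_type]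
      refine Finset.sum_congr rfl fun i _ => ?_
      simp only [not_not]
      rw [Finset.sum_ite_eq]
      simp only [Finset.mem_univ, if_true]
      exact hvv i
    have hfull' : ∑ p : Fin n × Fin n, ‖(⟪v p.1, v p.2⟫_ℂ)‖^2
        = ∑ i, ∑ j, ‖(⟪v i, v j⟫_ℂ)‖^2 := Fintype.sum_prod_type _
    rw [hfull'] at hsplit
    rw [hdiag] at hsplit
    linarith [hfull]
  -- per-L Welch bound
  have hL : ∀ L, (1/2:ℝ) * (∑ i ∈ I L, ‖v i‖^2)^2 - ∑ i ∈ I L, ‖v i‖^4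
      ≤ ∑ i ∈ I L, ∑ j ∈ (I L).erase i, ‖(⟪v i, v j⟫_ℂ)‖^2 := by
    intro L
    obtain ⟨W, hW2, hmem⟩ := hW L
    set w : Fin n → W := fun i => if h : v i ∈ W then (⟨v i, h⟩ : W) else 0 with hw
    have hwn : ∀ i ∈ I L, ‖w i‖ = ‖v i‖ := by
      intro i hi
      rw [hw]
      simp only [dif_pos (hmem i hi)]
      rfl
    have hwi : ∀ i ∈ I L, ∀ j ∈ I L, ⟪w i, w j⟫_ℂ = ⟪v i, v j⟫_ℂ := by
      intro i hi j hj
      rw [hw]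
      simp only [dif_pos (hmem i hi), dif_pos (hmem j hj)]
      rfl
    have hwelch := welch_aux (stdOrthonormalBasis ℂ W) (I L) w
    rw [Fintype.card_fin, hW2] at hwelch
    have hwsum : ∑ i ∈ I L, ‖w i‖^2 = ∑ i ∈ I L, ‖v i‖^2 :=
      Finset.sum_congr rfl fun i hi => by rw [hwn i hi]
    have hwsum2 : ∑ i ∈ I L, ∑ j ∈ I L, ‖⟪w i, w j⟫_ℂ‖^2
        = ∑ i ∈ I L, ∑ j ∈ I L, ‖(⟪v i, v j⟫_ℂ)‖^2 :=
      Finset.sum_congr rfl fun i hi => Finset.sum_congr rfl fun j hj => by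
        rw [hwi i hi j hj]
    rw [hwsum, hwsum2] at hwelch
    have herase : ∑ i ∈ I L, ∑ j ∈ I L, ‖(⟪v i, v j⟫_ℂ)‖^2
        = ∑ i ∈ I L, ‖v i‖^4 + ∑ i ∈ I L, ∑ j ∈ (I L).erase i, ‖(⟪v i, v j⟫_ℂ)‖^2 := by
      rw [← Finset.sum_add_distrib]
      refine Finset.sum_congr rfl fun i hi => ?_
      rw [← hvv i]
      exact (Finset.add_sum_erase (I L) (fun j => ‖(⟪v i, v j⟫_ℂ)‖^2) hi).symm
    push_cast at hwelch
    linarith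
  -- combine
  have hR : (0:ℝ) ≤ ∑ p ∈ R, ‖(⟪v p.1, v p.2⟫_ℂ)‖^2 :=
    Finset.sum_nonneg fun p _ => by positivity
  calc ∑ L, ((1/2:ℝ) * (∑ i ∈ I L, ‖v i‖^2)^2 - ∑ i ∈ I L, ‖v i‖^4)
      ≤ ∑ L, ∑ i ∈ I L, ∑ j ∈ (I L).erase i, ‖(⟪v i, v j⟫_ℂ)‖^2 :=
        Finset.sum_le_sum fun L _ => hL L
    _ ≤ (1/d:ℝ) * (∑ i, ‖v i‖^2)^2 - ∑ i, ‖v i‖^4 := by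
        rw [← hoff]
        rw [hdecomp]
        linarith
end

section
/- Let v_1, ..., v_n be vectors in a 2-dimensional complex inner product space W with ∑_{i,j} |⟨v_i, v_j⟩|² = (1/2)·(∑_i ‖v_i‖²)². Then for every i, the rank-one operator A_i(x) = ⟨x, v_i⟩ v_i commutes with the frame operator S(x) = ∑_j ⟨x, v_j⟩ v_j. -/
/-! For an orthonormal basis `(b k)` of a `d`-dimensional space and real `c`, the squared
Hilbert–Schmidt norm `∑ k, ‖S (b k) - c • b k‖²` of `S - c`, where `S` is the frame operator, equals
`∑ i j, |⟪vᵢ, vⱼ⟫|² - 2 c ∑ i, ‖vᵢ‖² + c² d`. At `c = (∑ i, ‖vᵢ‖²) / d` this is the defect in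
the Welch bound, so equality forces `S` to be the scalar operator `c • 1`. -/

open scoped InnerProductSpace

section FrameOperator

open InnerProductSpace RCLike

variable {𝕜 E ι κ : Type*} [RCLike 𝕜] [NormedAddCommGroup E] [InnerProductSpace 𝕜 E]
  [Fintype ι] [Fintype κ]

variable (𝕜) in
noncomputable def frameOperator (v : ι → E) : E →L[𝕜] E := ∑ i, rankOne 𝕜 (v i) (v i)

theorem frameOperator_apply (v : ι → E) (x : E) :
    frameOperator 𝕜 v x = ∑ i, ⟪v i, x⟫_𝕜 • v i := by
  simp [frameOperator]

theorem re_inner_frameOperator_apply_self (v : ι → E) (x : E) :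
    re ⟪frameOperator 𝕜 v x, x⟫_𝕜 = ∑ i, ‖⟪v i, x⟫_𝕜‖ ^ 2 := by
  simp only [frameOperator_apply, sum_inner, inner_smul_left, RCLike.conj_mul, map_sum]
  norm_cast

theorem inner_self_frameOperator_apply (v : ι → E) (x : E) :
    ⟪frameOperator 𝕜 v x, frameOperator 𝕜 v x⟫_𝕜 =
      ∑ i, ∑ j, ⟪v i, x⟫_𝕜 * ⟪x, v j⟫_𝕜 * ⟪v j, v i⟫_𝕜 := by
  simp only [frameOperator_apply, sum_inner, inner_sum, inner_smul_left, inner_smul_right,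
    inner_conj_symm, Finset.mul_sum]
  refine Finset.sum_congr rfl fun i _ => Finset.sum_congr rfl fun j _ => by ring

variable (b : OrthonormalBasis κ 𝕜 E) (v : ι → E)

theorem OrthonormalBasis.sum_norm_frameOperator_apply_sq :
    ∑ k, ‖frameOperator 𝕜 v (b k)‖ ^ 2 = ∑ i, ∑ j, ‖⟪v i, v j⟫_𝕜‖ ^ 2 := by
  have h : ((∑ k, ‖frameOperator 𝕜 v (b k)‖ ^ 2 : ℝ) : 𝕜) =
      ∑ i, ∑ j, ((‖⟪v i, v j⟫_𝕜‖ ^ 2 : ℝ) : 𝕜) := by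
    simp only [ofReal_sum, ofReal_pow, ← RCLike.conj_mul, inner_conj_symm,
      ← inner_self_eq_norm_sq_to_K, inner_self_frameOperator_apply]
    rw [Finset.sum_comm]
    refine Finset.sum_congr rfl fun i _ => ?_
    rw [Finset.sum_comm]
    refine Finset.sum_congr rfl fun j _ => ?_
    rw [← Finset.sum_mul, b.sum_inner_mul_inner, mul_comm]
  exact_mod_cast h

theorem OrthonormalBasis.sum_re_inner_frameOperator_apply :
    ∑ k, re ⟪frameOperator 𝕜 v (b k), b k⟫_𝕜 = ∑ i, ‖v i‖ ^ 2 := by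
  simp only [re_inner_frameOperator_apply_self]
  rw [Finset.sum_comm]
  exact Finset.sum_congr rfl fun i _ => b.sum_sq_norm_inner_left (v i)

theorem OrthonormalBasis.sum_norm_frameOperator_apply_sub_smul_sq (c : ℝ) :
    ∑ k, ‖frameOperator 𝕜 v (b k) - (c : 𝕜) • b k‖ ^ 2 =
      ∑ i, ∑ j, ‖⟪v i, v j⟫_𝕜‖ ^ 2 - 2 * c * ∑ i, ‖v i‖ ^ 2 + c ^ 2 * Fintype.card κ := by
  simp only [norm_sub_sq (𝕜 := 𝕜), inner_smul_right, norm_smul, b.norm_eq_one, re_ofReal_mul,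
    norm_ofReal, mul_one, sq_abs, Finset.sum_add_distrib, Finset.sum_sub_distrib, ← Finset.mul_sum,
    Finset.sum_const, Finset.card_univ, nsmul_eq_mul, b.sum_norm_frameOperator_apply_sq,
    b.sum_re_inner_frameOperator_apply]
  ring

theorem frameOperator_eq_smul_one_of_sum_norm_inner_sq_eq [FiniteDimensional 𝕜 E]
    (h : ∑ i, ∑ j, ‖⟪v i, v j⟫_𝕜‖ ^ 2 = (∑ i, ‖v i‖ ^ 2) ^ 2 / Module.finrank 𝕜 E) :
    frameOperator 𝕜 v = (((∑ i, ‖v i‖ ^ 2) / Module.finrank 𝕜 E : ℝ) : 𝕜) • 1 := by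
  set c : ℝ := (∑ i, ‖v i‖ ^ 2) / Module.finrank 𝕜 E with hc
  let b := stdOrthonormalBasis 𝕜 E
  have hzero : ∑ k, ‖frameOperator 𝕜 v (b k) - (c : 𝕜) • b k‖ ^ 2 = 0 := by
    rw [b.sum_norm_frameOperator_apply_sub_smul_sq, Fintype.card_fin, h]
    rcases eq_or_ne (Module.finrank 𝕜 E : ℝ) 0 with hd | hd
    · -- junk division: `c = 0`, and `h` says the Gram sum vanishes
      simp [c, hd]
    · rw [hc]
      field_simp
      ring
  have heig : ∀ k, frameOperator 𝕜 v (b k) = (c : 𝕜) • b k := fun k => by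
    have := (Finset.sum_eq_zero_iff_of_nonneg fun k _ => by positivity).mp hzero k
      (Finset.mem_univ k)
    simpa [sub_eq_zero] using this
  refine ContinuousLinearMap.coe_injective (b.toBasis.ext fun k => ?_)
  simpa using heig k

end FrameOperator

/-- Equality in the Welch bound in a 2-dimensional space forces the frame operator to
commute with each rank-one operator `Aᵢ : x ↦ ⟨x, vᵢ⟩ vᵢ`. -/
theorem rank_one_commutes_of_welch_equality {W : Type*} [NormedAddCommGroup W]
    [InnerProductSpace ℂ W] [FiniteDimensional ℂ W]
    (hW : Module.finrank ℂ W = 2) (n : ℕ) (v : Fin n → W)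
    (heq : ∑ i, ∑ j, ‖(⟪v i, v j⟫_ℂ)‖ ^ 2 = (1 / 2 : ℝ) * (∑ i, ‖v i‖ ^ 2) ^ 2)
    (i : Fin n) :
    ∀ x : W,
      ⟪v i, (∑ j, ⟪v j, x⟫_ℂ • v j)⟫_ℂ • v i =
        ∑ j, ⟪v j, (⟪v i, x⟫_ℂ • v i)⟫_ℂ • v j := by
  have hS := frameOperator_eq_smul_one_of_sum_norm_inner_sq_eq v
    (by rw [heq, hW]; push_cast; ring)
  intro x
  rw [← frameOperator_apply, ← frameOperator_apply, hS]
  simp only [smul_apply, one_apply_eq_self, inner_smul_right, mul_smul]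
end
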